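/- Let H be a Hilbert space, let T, T_a (for a in a finite index set A) be bounded invertible linear operators on H with ‖T_a − T‖ ≤ η for all a ∈ A and ‖T^{-1}‖ ≤ s with s·η < 1. Let w_a ≥ 0 with Σ_a w_a = 1 and set T_A := Σ_a w_a T_a. Given vectors δ_a ∈ H and δ_A ∈ H satisfying T_A(δ_A) = Σ_a w_a T_a(δ_a), with ‖δ_a‖ ≤ η_δ for all a, and assuming T_A is invertible, one has ‖δ_A − Σ_a w_a δ_a‖ ≤ (2·s·η / (1 − s·η)) · η_δ. -/

import Mathlib

/-!
Write `T_A = ∑ₐ wₐ Tₐ` and `D = ∑ₐ wₐ δₐ`. By linearity,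
`T_A (δ_A - D) = ∑ₐ wₐ (Tₐ - T) δₐ - (T_A - T) D`, and both terms have norm at most `η ηδ`:
as the weights form a convex combination, `‖D‖ ≤ ηδ` and `‖T_A - T‖ ≤ η`. Finally
`T_A⁻¹ = T⁻¹ - T_A⁻¹ (T_A - T) T⁻¹` gives `‖T_A⁻¹‖ ≤ s + ‖T_A⁻¹‖ η s`, i.e. the Neumann-series
bound `‖T_A⁻¹‖ ≤ s / (1 - s η)`.
-/

open Finset

theorem norm_sum_smul_le_of_norm_le {ι E : Type*} [Fintype ι] [SeminormedAddCommGroup E]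
    [NormedSpace ℝ E] (w : ι → ℝ) (hw : ∀ a, 0 ≤ w a) (hw1 : ∑ a, w a = 1) {f : ι → E} {C : ℝ}
    (hf : ∀ a, ‖f a‖ ≤ C) :
    ‖∑ a, w a • f a‖ ≤ C := by
  simpa using (convex_closedBall (0 : E) C).sum_mem (fun a _ => hw a) hw1
    (fun a _ => by simpa using hf a)

theorem sum_smul_sub_const_of_sum_eq_one {ι R M : Type*} [Fintype ι] [Ring R] [AddCommGroup M]
    [Module R M] {w : ι → R} (hw1 : ∑ a, w a = 1) (f : ι → M) (c : M) :
    ∑ a, w a • (f a - c) = ∑ a, w a • f a - c := by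
  simp only [smul_sub, sum_sub_distrib, ← sum_smul, hw1, one_smul]

theorem norm_inverse_le_of_norm_sub_le {R : Type*} [SeminormedRing R] {T T' B B' : R} {s η : ℝ}
    (hT : T * T' = 1) (hB : B' * B = 1) (hs : ‖T'‖ ≤ s) (hη : ‖B - T‖ ≤ η) (hsη : s * η < 1) :
    ‖B'‖ ≤ s / (1 - s * η) := by
  have hB' : B' = T' - B' * ((B - T) * T') := by
    calc B' = B' * (T * T') := by rw [hT, mul_one]
      _ = (B' * B) * T' - B' * ((B - T) * T') := by noncomm_ring
      _ = T' - B' * ((B - T) * T') := by rw [hB, one_mul]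
  have hrec : ‖B'‖ ≤ s + ‖B'‖ * (η * s) :=
    calc ‖B'‖ ≤ ‖T'‖ + ‖B'‖ * (‖B - T‖ * ‖T'‖) := by
          conv_lhs => rw [hB']
          refine (norm_sub_le _ _).trans (add_le_add_right ?_ _)
          exact (norm_mul_le _ _).trans (by gcongr; exact norm_mul_le _ _)
      _ ≤ s + ‖B'‖ * (η * s) := by
          have : 0 ≤ η := (norm_nonneg _).trans hη
          gcongr
  rw [le_div_iff₀ (by linarith)]
  linarith

theorem sum_smul_apply_sub_sum_smul {ι 𝕜 E : Type*} [Fintype ι] [NormedField 𝕜]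
    [SeminormedAddCommGroup E] [NormedSpace 𝕜 E] (w : ι → 𝕜)
    (A : ι → E →L[𝕜] E) (B : E →L[𝕜] E) (v : ι → E) {x : E}
    (hx : (∑ a, w a • A a) x = ∑ a, w a • A a (v a)) :
    (∑ a, w a • A a) (x - ∑ a, w a • v a) =
      ∑ a, w a • (A a - B) (v a) - (∑ a, w a • A a - B) (∑ a, w a • v a) := by
  simp only [map_sub, hx, sub_apply, smul_sub, sum_sub_distrib, map_sum, map_smul]
  abel

theorem aggregated_deviation_bound_general {H : Type*} [NormedAddCommGroup H]
    [InnerProductSpace ℝ H] {ι : Type*} [Fintype ι]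
    (T : H →L[ℝ] H) (Ta : ι → H →L[ℝ] H) (T' TA' : H →L[ℝ] H)
    (hT1 : T.comp T' = ContinuousLinearMap.id ℝ H)
    (s η ηδ : ℝ) (hs : ‖T'‖ ≤ s) (hη : ∀ a, ‖Ta a - T‖ ≤ η) (hsη : s * η < 1)
    (w : ι → ℝ) (hw : ∀ a, 0 ≤ w a) (hw1 : ∑ a, w a = 1)
    (hTA2 : TA'.comp (∑ a, w a • Ta a) = ContinuousLinearMap.id ℝ H)
    (δ : ι → H) (δA : H)
    (heq : (∑ a, w a • Ta a) δA = ∑ a, w a • (Ta a (δ a)))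
    (hδ : ∀ a, ‖δ a‖ ≤ ηδ) :
    ‖δA - ∑ a, w a • δ a‖ ≤ 2 * s * η / (1 - s * η) * ηδ := by
  set TA := ∑ a, w a • Ta a
  set D := ∑ a, w a • δ a
  have hTA : ‖TA - T‖ ≤ η := by
    rw [← sum_smul_sub_const_of_sum_eq_one hw1]
    exact norm_sum_smul_le_of_norm_le w hw hw1 hη
  have hTA' : ‖TA'‖ ≤ s / (1 - s * η) := norm_inverse_le_of_norm_sub_le hT1 hTA2 hs hTA hsη
  have hD : ‖D‖ ≤ ηδ := norm_sum_smul_le_of_norm_le w hw hw1 hδ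
  have hres : ‖TA (δA - D)‖ ≤ 2 * η * ηδ := by
    rw [sum_smul_apply_sub_sum_smul w Ta T δ heq]
    refine (norm_sub_le _ _).trans ?_
    linarith [norm_sum_smul_le_of_norm_le w hw hw1
        fun a => (Ta a - T).le_of_opNorm_le_of_le (hη a) (hδ a),
      (TA - T).le_of_opNorm_le_of_le hTA hD]
  calc ‖δA - D‖ = ‖TA' (TA (δA - D))‖ := by rw [← ContinuousLinearMap.comp_apply, hTA2]; rfl
    _ ≤ s / (1 - s * η) * (2 * η * ηδ) := TA'.le_of_opNorm_le_of_le hTA' hres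
    _ = 2 * s * η / (1 - s * η) * ηδ := by ring

/-- Transfer of functional similarity through an aggregated operator:
if `T` and the `T a` are invertible with `‖T⁻¹‖ ≤ s`, `‖T a − T‖ ≤ η` and `s·η < 1`,
`w` is a probability weight vector, `T_A := ∑ a, w a • T a` is invertible, and the
vectors `δ a`, `δA` satisfy `T_A δA = ∑ a, w a • T a (δ a)` with `‖δ a‖ ≤ ηδ`,
then `‖δA − ∑ a, w a • δ a‖ ≤ (2·s·η/(1 − s·η))·ηδ`. -/
theorem aggregated_deviation_bound {H : Type*} [NormedAddCommGroup H]
    [InnerProductSpace ℝ H] [CompleteSpace H] {ι : Type*} [Fintype ι]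
    (T : H →L[ℝ] H) (Ta : ι → H →L[ℝ] H) (T' TA' : H →L[ℝ] H)
    (hT1 : T.comp T' = ContinuousLinearMap.id ℝ H)
    (hT2 : T'.comp T = ContinuousLinearMap.id ℝ H)
    (hTainv : ∀ a, ∃ Ta' : H →L[ℝ] H,
      (Ta a).comp Ta' = ContinuousLinearMap.id ℝ H ∧
      Ta'.comp (Ta a) = ContinuousLinearMap.id ℝ H)
    (s η ηδ : ℝ) (hs : ‖T'‖ ≤ s) (hη : ∀ a, ‖Ta a - T‖ ≤ η) (hsη : s * η < 1)
    (w : ι → ℝ) (hw : ∀ a, 0 ≤ w a) (hw1 : ∑ a, w a = 1)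
    (hTA1 : (∑ a, w a • Ta a).comp TA' = ContinuousLinearMap.id ℝ H)
    (hTA2 : TA'.comp (∑ a, w a • Ta a) = ContinuousLinearMap.id ℝ H)
    (δ : ι → H) (δA : H)
    (heq : (∑ a, w a • Ta a) δA = ∑ a, w a • (Ta a (δ a)))
    (hδ : ∀ a, ‖δ a‖ ≤ ηδ) :
    ‖δA - ∑ a, w a • δ a‖ ≤ 2 * s * η / (1 - s * η) * ηδ :=
  aggregated_deviation_bound_general T Ta T' TA' hT1 s η ηδ hs hη hsη w hw hw1 hTA2 δ δA heq hδ
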